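/- arXiv:math/0601533 — 2 statements merged into one kernel-verified Lean document; each statement's English description precedes it below -/
import Mathlib

section
/- Every root of the Tits form of Ẽ6 is either positive or negative: if v ∈ ℤ^7 is nonzero and q(v) ≤ 1, then either all seven coordinates of v are ≥ 0, or all seven coordinates of v are ≤ 0. -/
/-- The Tits quadratic form of the extended Dynkin graph `Ẽ6`, over `ℤ`.
Coordinates are indexed so that `x i` for `i = 0,…,5` are `x1,…,x6`
(the vertices `g1,…,g6`) and `x 6` is `x0` (the central vertex `g0`). -/
def titsE6 (x : Fin 7 → ℤ) : ℤ :=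
  x 0 ^ 2 + x 1 ^ 2 + x 2 ^ 2 + x 3 ^ 2 + x 4 ^ 2 + x 5 ^ 2 + x 6 ^ 2
    - x 0 * x 1 - x 2 * x 3 - x 4 * x 5 - x 6 * (x 1 + x 3 + x 5)

set_option maxHeartbeats 2000000 in
set_option synthInstance.maxSize 400 in
set_option synthInstance.maxHeartbeats 400000 in
lemma titsE6_bdd : ∀ a ∈ Finset.Icc (-1:ℤ) 1, ∀ b ∈ Finset.Icc (-1:ℤ) 1,
    ∀ c ∈ Finset.Icc (-1:ℤ) 1, ∀ d ∈ Finset.Icc (-1:ℤ) 1, ∀ e ∈ Finset.Icc (-1:ℤ) 1,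
    ∀ f ∈ Finset.Icc (-1:ℤ) 1, ∀ g ∈ Finset.Icc (-1:ℤ) 1,
    a^2+b^2+c^2+d^2+e^2+f^2+g^2 - a*b - c*d - e*f - g*(b+d+f) ≤ 1 →
      (0 ≤ a ∧ 0 ≤ b ∧ 0 ≤ c ∧ 0 ≤ d ∧ 0 ≤ e ∧ 0 ≤ f ∧ 0 ≤ g) ∨
      (a ≤ 0 ∧ b ≤ 0 ∧ c ≤ 0 ∧ d ≤ 0 ∧ e ≤ 0 ∧ f ≤ 0 ∧ g ≤ 0) := by decide

set_option maxHeartbeats 1000000 in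
lemma titsE6_scalar (a b c d e f g : ℤ)
    (hq : a^2+b^2+c^2+d^2+e^2+f^2+g^2 - a*b - c*d - e*f - g*(b+d+f) ≤ 1) :
    (0 ≤ a ∧ 0 ≤ b ∧ 0 ≤ c ∧ 0 ≤ d ∧ 0 ≤ e ∧ 0 ≤ f ∧ 0 ≤ g) ∨
    (a ≤ 0 ∧ b ≤ 0 ∧ c ≤ 0 ∧ d ≤ 0 ∧ e ≤ 0 ∧ f ≤ 0 ∧ g ≤ 0) := by
  have h12 : 3*(2*a-b)^2 + 3*(2*c-d)^2 + 3*(2*e-f)^2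
      + (3*b-2*g)^2 + (3*d-2*g)^2 + (3*f-2*g)^2 ≤ 12 := by
    have hid : 3*(2*a-b)^2 + 3*(2*c-d)^2 + 3*(2*e-f)^2
        + (3*b-2*g)^2 + (3*d-2*g)^2 + (3*f-2*g)^2
        = 12*(a^2+b^2+c^2+d^2+e^2+f^2+g^2 - a*b - c*d - e*f - g*(b+d+f)) := by ring
    linarith
  -- linear bounds from the sum-of-squares identity
  have hA1 : -2 ≤ 2*a - b ∧ 2*a - b ≤ 2 := by
    constructor <;>
      nlinarith [sq_nonneg (2*c-d), sq_nonneg (2*e-f), sq_nonneg (3*b-2*g),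
        sq_nonneg (3*d-2*g), sq_nonneg (3*f-2*g), sq_nonneg (2*a-b+2), sq_nonneg (2*a-b-2)]
  have hA2 : -2 ≤ 2*c - d ∧ 2*c - d ≤ 2 := by
    constructor <;>
      nlinarith [sq_nonneg (2*a-b), sq_nonneg (2*e-f), sq_nonneg (3*b-2*g),
        sq_nonneg (3*d-2*g), sq_nonneg (3*f-2*g), sq_nonneg (2*c-d+2), sq_nonneg (2*c-d-2)]
  have hA3 : -2 ≤ 2*e - f ∧ 2*e - f ≤ 2 := by
    constructor <;>
      nlinarith [sq_nonneg (2*a-b), sq_nonneg (2*c-d), sq_nonneg (3*b-2*g),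
        sq_nonneg (3*d-2*g), sq_nonneg (3*f-2*g), sq_nonneg (2*e-f+2), sq_nonneg (2*e-f-2)]
  have hB1 : -21 ≤ 6*(3*b - 2*g) ∧ 6*(3*b - 2*g) ≤ 21 := by
    constructor <;>
      nlinarith [sq_nonneg (2*a-b), sq_nonneg (2*c-d), sq_nonneg (2*e-f),
        sq_nonneg (3*d-2*g), sq_nonneg (3*f-2*g), sq_nonneg (3*b-2*g+3), sq_nonneg (3*b-2*g-3)]
  have hB2 : -21 ≤ 6*(3*d - 2*g) ∧ 6*(3*d - 2*g) ≤ 21 := by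
    constructor <;>
      nlinarith [sq_nonneg (2*a-b), sq_nonneg (2*c-d), sq_nonneg (2*e-f),
        sq_nonneg (3*b-2*g), sq_nonneg (3*f-2*g), sq_nonneg (3*d-2*g+3), sq_nonneg (3*d-2*g-3)]
  have hB3 : -21 ≤ 6*(3*f - 2*g) ∧ 6*(3*f - 2*g) ≤ 21 := by
    constructor <;>
      nlinarith [sq_nonneg (2*a-b), sq_nonneg (2*c-d), sq_nonneg (2*e-f),
        sq_nonneg (3*b-2*g), sq_nonneg (3*d-2*g), sq_nonneg (3*f-2*g+3), sq_nonneg (3*f-2*g-3)]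
  obtain ⟨hA1l, hA1r⟩ := hA1
  obtain ⟨hA2l, hA2r⟩ := hA2
  obtain ⟨hA3l, hA3r⟩ := hA3
  obtain ⟨hB1l, hB1r⟩ := hB1
  obtain ⟨hB2l, hB2r⟩ := hB2
  obtain ⟨hB3l, hB3r⟩ := hB3
  rcases le_or_gt 2 g with hg | hg
  · left; omega
  rcases le_or_gt g (-2) with hg' | hg'
  · right; omega
  -- now -1 ≤ g ≤ 1 and all coordinates are in [-1, 1]
  have hbd : a ∈ Finset.Icc (-1:ℤ) 1 ∧ b ∈ Finset.Icc (-1:ℤ) 1 ∧ c ∈ Finset.Icc (-1:ℤ) 1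
      ∧ d ∈ Finset.Icc (-1:ℤ) 1 ∧ e ∈ Finset.Icc (-1:ℤ) 1 ∧ f ∈ Finset.Icc (-1:ℤ) 1
      ∧ g ∈ Finset.Icc (-1:ℤ) 1 := by
    simp only [Finset.mem_Icc]
    omega
  obtain ⟨h1, h2, h3, h4, h5, h6, h7⟩ := hbd
  exact titsE6_bdd a h1 b h2 c h3 d h4 e h5 f h6 g h7 hq

/-- Every root of the Tits form of `Ẽ6` (a nonzero integer vector `v`
with `q(v) ≤ 1`) is either positive or negative. -/
theorem titsE6_root_pos_or_neg (v : Fin 7 → ℤ) (hv : v ≠ 0) (hq : titsE6 v ≤ 1) :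
    (∀ i, 0 ≤ v i) ∨ (∀ i, v i ≤ 0) := by
  unfold titsE6 at hq
  rcases titsE6_scalar (v 0) (v 1) (v 2) (v 3) (v 4) (v 5) (v 6) hq with
    ⟨h0, h1, h2, h3, h4, h5, h6⟩ | ⟨h0, h1, h2, h3, h4, h5, h6⟩
  · left; intro i; fin_cases i <;> assumption
  · right; intro i; fin_cases i <;> assumption
end

section
/- For all three families of dimension vectors of Ẽ6 the following holds. Family I: v_1 = (1,0,0,0,0,0,0), v_2 = (1,1,0,0,0,0,0), v_3 = (0,1,0,0,0,0,1), v_4 = (0,0,0,1,0,1,1), v_5 = (0,0,1,1,1,1,1), v_6 = (0,1,1,1,1,1,1), v_7 = (1,1,0,1,0,1,2), v_8 = (1,2,0,1,0,1,2), v_9 = (1,2,1,1,1,1,2), v_10 = (1,1,1,2,1,2,2), v_11 = (0,1,1,2,1,2,3), v_12 = (0,2,1,2,1,2,3), with d_k = v_r + qδ for k = 12q + r, 1 ≤ r ≤ 12, k ≥ 15. Family II: v_1 = (0,1,0,0,0,0,0), v_2 = (1,1,0,0,0,0,1), v_3 = (1,1,0,1,0,1,1), v_4 = (0,1,1,1,1,1,2),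 v_5 = (0,1,1,2,1,2,2), v_6 = (1,1,1,2,1,2,3), with d_k = v_r + qδ for k = 6q + r, 1 ≤ r ≤ 6, k ≥ 8. Family III: v_1 = (0,0,0,0,0,0,1), v_2 = (0,1,0,1,0,1,1), v_3 = (1,1,1,1,1,1,2), v_4 = (1,2,1,2,1,2,2), with d_k = v_r + qδ for k = 4q + r, 1 ≤ r ≤ 4, k ≥ 5. Then each such d_k is a real root of the Tits form, i.e. q(d_k) = 1, and all seven coordinates of M_d d_k are strictly positive integers (so M_d d_k is an admissible generalized dimension). -/
open Matrix

/-- The minimal imaginary root `δ = (1,2,1,2,1,2,3)` of `Ẽ6`. -/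
def deltaZ : Fin 7 → ℤ := ![1, 2, 1, 2, 1, 2, 3]

/-- The integer matrix `M_d` sending `d = (d1,d2,d3,d4,d5,d6,d0)` to
`(d2−d1, d1, d4−d3, d3, d6−d5, d5, d0)`. -/
def MdZ : Matrix (Fin 7) (Fin 7) ℤ :=
  !![-1, 1, 0, 0, 0, 0, 0;
      1, 0, 0, 0, 0, 0, 0;
      0, 0, -1, 1, 0, 0, 0;
      0, 0, 1, 0, 0, 0, 0;
      0, 0, 0, 0, -1, 1, 0;
      0, 0, 0, 0, 1, 0, 0;
      0, 0, 0, 0, 0, 0, 1]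

/-- The vectors `v_1,…,v_12` of Family I. -/
def vFamI : Fin 12 → (Fin 7 → ℤ) :=
  ![![1,0,0,0,0,0,0], ![1,1,0,0,0,0,0], ![0,1,0,0,0,0,1], ![0,0,0,1,0,1,1],
    ![0,0,1,1,1,1,1], ![0,1,1,1,1,1,1], ![1,1,0,1,0,1,2], ![1,2,0,1,0,1,2],
    ![1,2,1,1,1,1,2], ![1,1,1,2,1,2,2], ![0,1,1,2,1,2,3], ![0,2,1,2,1,2,3]]

/-- Family I: `d_k = v_r + qδ`, where `k = 12q + r` with `1 ≤ r ≤ 12`. -/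
def dFamI (k : ℕ) : Fin 7 → ℤ :=
  vFamI ⟨(k - 1) % 12, Nat.mod_lt _ (by norm_num)⟩ + (((k - 1) / 12 : ℕ) : ℤ) • deltaZ

/-- The vectors `v_1,…,v_6` of Family II. -/
def vFamII : Fin 6 → (Fin 7 → ℤ) :=
  ![![0,1,0,0,0,0,0], ![1,1,0,0,0,0,1], ![1,1,0,1,0,1,1],
    ![0,1,1,1,1,1,2], ![0,1,1,2,1,2,2], ![1,1,1,2,1,2,3]]

/-- Family II: `d_k = v_r + qδ`, where `k = 6q + r` with `1 ≤ r ≤ 6`. -/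
def dFamII (k : ℕ) : Fin 7 → ℤ :=
  vFamII ⟨(k - 1) % 6, Nat.mod_lt _ (by norm_num)⟩ + (((k - 1) / 6 : ℕ) : ℤ) • deltaZ

/-- The vectors `v_1,…,v_4` of Family III. -/
def vFamIII : Fin 4 → (Fin 7 → ℤ) :=
  ![![0,0,0,0,0,0,1], ![0,1,0,1,0,1,1], ![1,1,1,1,1,1,2], ![1,2,1,2,1,2,2]]

/-- Family III: `d_k = v_r + qδ`, where `k = 4q + r` with `1 ≤ r ≤ 4`. -/
def dFamIII (k : ℕ) : Fin 7 → ℤ :=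
  vFamIII ⟨(k - 1) % 4, Nat.mod_lt _ (by norm_num)⟩ + (((k - 1) / 4 : ℕ) : ℤ) • deltaZ

lemma cons7_0 {α : Type*} (a b c d e f g : α) : (![a,b,c,d,e,f,g]) (0 : Fin 7) = a := rfl
lemma cons7m_0 {α : Type*} (a b c d e f g : α) (h : (0:ℕ) < 7) : (![a,b,c,d,e,f,g]) ⟨0, h⟩ = a := rfl
lemma cons7_1 {α : Type*} (a b c d e f g : α) : (![a,b,c,d,e,f,g]) (1 : Fin 7) = b := rfl
lemma cons7m_1 {α : Type*} (a b c d e f g : α) (h : (1:ℕ) < 7) : (![a,b,c,d,e,f,g]) ⟨1, h⟩ = b := rfl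
lemma cons7_2 {α : Type*} (a b c d e f g : α) : (![a,b,c,d,e,f,g]) (2 : Fin 7) = c := rfl
lemma cons7m_2 {α : Type*} (a b c d e f g : α) (h : (2:ℕ) < 7) : (![a,b,c,d,e,f,g]) ⟨2, h⟩ = c := rfl
lemma cons7_3 {α : Type*} (a b c d e f g : α) : (![a,b,c,d,e,f,g]) (3 : Fin 7) = d := rfl
lemma cons7m_3 {α : Type*} (a b c d e f g : α) (h : (3:ℕ) < 7) : (![a,b,c,d,e,f,g]) ⟨3, h⟩ = d := rfl
lemma cons7_4 {α : Type*} (a b c d e f g : α) : (![a,b,c,d,e,f,g]) (4 : Fin 7) = e := rfl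
lemma cons7m_4 {α : Type*} (a b c d e f g : α) (h : (4:ℕ) < 7) : (![a,b,c,d,e,f,g]) ⟨4, h⟩ = e := rfl
lemma cons7_5 {α : Type*} (a b c d e f g : α) : (![a,b,c,d,e,f,g]) (5 : Fin 7) = f := rfl
lemma cons7m_5 {α : Type*} (a b c d e f g : α) (h : (5:ℕ) < 7) : (![a,b,c,d,e,f,g]) ⟨5, h⟩ = f := rfl
lemma cons7_6 {α : Type*} (a b c d e f g : α) : (![a,b,c,d,e,f,g]) (6 : Fin 7) = g := rfl
lemma cons7m_6 {α : Type*} (a b c d e f g : α) (h : (6:ℕ) < 7) : (![a,b,c,d,e,f,g]) ⟨6, h⟩ = g := rfl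
lemma vFamI_0 (h : (0:ℕ) < 12) : vFamI ⟨0, h⟩ = ![1,0,0,0,0,0,0] := rfl
lemma vFamI_1 (h : (1:ℕ) < 12) : vFamI ⟨1, h⟩ = ![1,1,0,0,0,0,0] := rfl
lemma vFamI_2 (h : (2:ℕ) < 12) : vFamI ⟨2, h⟩ = ![0,1,0,0,0,0,1] := rfl
lemma vFamI_3 (h : (3:ℕ) < 12) : vFamI ⟨3, h⟩ = ![0,0,0,1,0,1,1] := rfl
lemma vFamI_4 (h : (4:ℕ) < 12) : vFamI ⟨4, h⟩ = ![0,0,1,1,1,1,1] := rfl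
lemma vFamI_5 (h : (5:ℕ) < 12) : vFamI ⟨5, h⟩ = ![0,1,1,1,1,1,1] := rfl
lemma vFamI_6 (h : (6:ℕ) < 12) : vFamI ⟨6, h⟩ = ![1,1,0,1,0,1,2] := rfl
lemma vFamI_7 (h : (7:ℕ) < 12) : vFamI ⟨7, h⟩ = ![1,2,0,1,0,1,2] := rfl
lemma vFamI_8 (h : (8:ℕ) < 12) : vFamI ⟨8, h⟩ = ![1,2,1,1,1,1,2] := rfl
lemma vFamI_9 (h : (9:ℕ) < 12) : vFamI ⟨9, h⟩ = ![1,1,1,2,1,2,2] := rfl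
lemma vFamI_10 (h : (10:ℕ) < 12) : vFamI ⟨10, h⟩ = ![0,1,1,2,1,2,3] := rfl
lemma vFamI_11 (h : (11:ℕ) < 12) : vFamI ⟨11, h⟩ = ![0,2,1,2,1,2,3] := rfl
lemma vFamII_0 (h : (0:ℕ) < 6) : vFamII ⟨0, h⟩ = ![0,1,0,0,0,0,0] := rfl
lemma vFamII_1 (h : (1:ℕ) < 6) : vFamII ⟨1, h⟩ = ![1,1,0,0,0,0,1] := rfl
lemma vFamII_2 (h : (2:ℕ) < 6) : vFamII ⟨2, h⟩ = ![1,1,0,1,0,1,1] := rfl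
lemma vFamII_3 (h : (3:ℕ) < 6) : vFamII ⟨3, h⟩ = ![0,1,1,1,1,1,2] := rfl
lemma vFamII_4 (h : (4:ℕ) < 6) : vFamII ⟨4, h⟩ = ![0,1,1,2,1,2,2] := rfl
lemma vFamII_5 (h : (5:ℕ) < 6) : vFamII ⟨5, h⟩ = ![1,1,1,2,1,2,3] := rfl
lemma vFamIII_0 (h : (0:ℕ) < 4) : vFamIII ⟨0, h⟩ = ![0,0,0,0,0,0,1] := rfl
lemma vFamIII_1 (h : (1:ℕ) < 4) : vFamIII ⟨1, h⟩ = ![0,1,0,1,0,1,1] := rfl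
lemma vFamIII_2 (h : (2:ℕ) < 4) : vFamIII ⟨2, h⟩ = ![1,1,1,1,1,1,2] := rfl
lemma vFamIII_3 (h : (3:ℕ) < 4) : vFamIII ⟨3, h⟩ = ![1,2,1,2,1,2,2] := rfl

lemma tits_shift (v : Fin 7 → ℤ) (q : ℤ) :
    titsE6 (v + q • deltaZ) = titsE6 v := by
  simp only [titsE6, deltaZ, Pi.add_apply, Pi.smul_apply, smul_eq_mul,
    cons7_0, cons7m_0, cons7_1, cons7m_1, cons7_2, cons7m_2, cons7_3, cons7m_3, cons7_4, cons7m_4, cons7_5, cons7m_5, cons7_6, cons7m_6]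
  ring

/-- Each `d_k` of the three families of dimension vectors of `Ẽ6` is a real root
of the Tits form, and all seven coordinates of `M_d d_k` are strictly positive,
so `M_d d_k` is an admissible generalized dimension. -/
theorem famE6_real_roots_pos :
    (∀ k : ℕ, 15 ≤ k → titsE6 (dFamI k) = 1 ∧ ∀ i, 0 < (MdZ *ᵥ dFamI k) i) ∧
    (∀ k : ℕ, 8 ≤ k → titsE6 (dFamII k) = 1 ∧ ∀ i, 0 < (MdZ *ᵥ dFamII k) i) ∧
    (∀ k : ℕ, 5 ≤ k → titsE6 (dFamIII k) = 1 ∧ ∀ i, 0 < (MdZ *ᵥ dFamIII k) i) := by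
  refine ⟨?_, ?_, ?_⟩
  · intro k hk
    obtain ⟨q, m, hmlt, hk'⟩ : ∃ q m, m < 12 ∧ k - 1 = 12 * q + m :=
      ⟨(k-1)/12, (k-1)%12, by omega, by omega⟩
    have h1 : (k-1) % 12 = m := by omega
    have h2 : (k-1) / 12 = q := by omega
    have hq : 1 ≤ q := by omega
    have hq0 : m = 0 → 2 ≤ q := by omega
    rw [dFamI]
    simp only [h1, h2]
    interval_cases m <;>
      refine ⟨by rw [tits_shift]; rfl, fun i => ?_⟩ <;>
      fin_cases i <;>
      simp only [Matrix.mulVec, dotProduct, Fin.sum_univ_seven, MdZ, deltaZ,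
        Pi.add_apply, Pi.smul_apply, smul_eq_mul, Matrix.of_apply, cons7_0, cons7m_0, cons7_1, cons7m_1, cons7_2, cons7m_2, cons7_3, cons7m_3, cons7_4, cons7m_4, cons7_5, cons7m_5, cons7_6, cons7m_6, vFamI_0, vFamI_1, vFamI_2, vFamI_3, vFamI_4, vFamI_5, vFamI_6, vFamI_7, vFamI_8, vFamI_9, vFamI_10, vFamI_11, vFamII_0, vFamII_1, vFamII_2, vFamII_3, vFamII_4, vFamII_5, vFamIII_0, vFamIII_1, vFamIII_2, vFamIII_3] <;>
      omega
  · intro k hk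
    obtain ⟨q, m, hmlt, hk'⟩ : ∃ q m, m < 6 ∧ k - 1 = 6 * q + m :=
      ⟨(k-1)/6, (k-1)%6, by omega, by omega⟩
    have h1 : (k-1) % 6 = m := by omega
    have h2 : (k-1) / 6 = q := by omega
    have hq : 1 ≤ q := by omega
    have hq0 : m = 0 → 1 ≤ q := by omega
    rw [dFamII]
    simp only [h1, h2]
    interval_cases m <;>
      refine ⟨by rw [tits_shift]; rfl, fun i => ?_⟩ <;>
      fin_cases i <;>
      simp only [Matrix.mulVec, dotProduct, Fin.sum_univ_seven, MdZ, deltaZ,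
        Pi.add_apply, Pi.smul_apply, smul_eq_mul, Matrix.of_apply, cons7_0, cons7m_0, cons7_1, cons7m_1, cons7_2, cons7m_2, cons7_3, cons7m_3, cons7_4, cons7m_4, cons7_5, cons7m_5, cons7_6, cons7m_6, vFamI_0, vFamI_1, vFamI_2, vFamI_3, vFamI_4, vFamI_5, vFamI_6, vFamI_7, vFamI_8, vFamI_9, vFamI_10, vFamI_11, vFamII_0, vFamII_1, vFamII_2, vFamII_3, vFamII_4, vFamII_5, vFamIII_0, vFamIII_1, vFamIII_2, vFamIII_3] <;>
      omega
  · intro k hk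
    obtain ⟨q, m, hmlt, hk'⟩ : ∃ q m, m < 4 ∧ k - 1 = 4 * q + m :=
      ⟨(k-1)/4, (k-1)%4, by omega, by omega⟩
    have h1 : (k-1) % 4 = m := by omega
    have h2 : (k-1) / 4 = q := by omega
    have hq : 1 ≤ q := by omega
    have hq0 : m = 0 → 1 ≤ q := by omega
    rw [dFamIII]
    simp only [h1, h2]
    interval_cases m <;>
      refine ⟨by rw [tits_shift]; rfl, fun i => ?_⟩ <;>
      fin_cases i <;>
      simp only [Matrix.mulVec, dotProduct, Fin.sum_univ_seven, MdZ, deltaZ,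
        Pi.add_apply, Pi.smul_apply, smul_eq_mul, Matrix.of_apply, cons7_0, cons7m_0, cons7_1, cons7m_1, cons7_2, cons7m_2, cons7_3, cons7m_3, cons7_4, cons7m_4, cons7_5, cons7m_5, cons7_6, cons7m_6, vFamI_0, vFamI_1, vFamI_2, vFamI_3, vFamI_4, vFamI_5, vFamI_6, vFamI_7, vFamI_8, vFamI_9, vFamI_10, vFamI_11, vFamII_0, vFamII_1, vFamII_2, vFamII_3, vFamII_4, vFamII_5, vFamIII_0, vFamIII_1, vFamIII_2, vFamIII_3] <;>
      omega
end
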